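/- arXiv:1307.7210 — 5 statements merged into one kernel-verified Lean document; each statement's English description precedes it below -/
import Mathlib

section
/- Let a > 0, c > 0, g : [0, q_max] → ℝ convex differentiable, and let q*(m) maximize φ(q, m) = a(q − c(q − m)^2) − g(q) over [0, q_max]. Then the map m ↦ V(m) = φ(q*(m), m) is differentiable with V'(m) = 2ac·(q*(m) − m). -/
theorem stmt_4 (a c qmax : ℝ) (ha : 0 < a) (hc : 0 < c) (hqmax : 0 < qmax)
    (g : ℝ → ℝ) (hg : ConvexOn ℝ (Set.Icc 0 qmax) g)
    (hgdiff : DifferentiableOn ℝ g (Set.Icc 0 qmax))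
    (qstar : ℝ → ℝ)
    (hqstar : ∀ m : ℝ, qstar m ∈ Set.Icc 0 qmax ∧
      IsMaxOn (fun q => a * (q - c * (q - m) ^ 2) - g q) (Set.Icc 0 qmax) (qstar m)) :
    ∀ m : ℝ,
      HasDerivAt (fun m' => a * (qstar m' - c * (qstar m' - m') ^ 2) - g (qstar m'))
        (2 * a * c * (qstar m - m)) m := by
  -- basic max property
  have hmax : ∀ m' q, q ∈ Set.Icc 0 qmax →
      a * (q - c * (q - m') ^ 2) - g q ≤
        a * (qstar m' - c * (qstar m' - m') ^ 2) - g (qstar m') := by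
    intro m' q hq
    exact isMaxOn_iff.mp (hqstar m').2 q hq
  -- strong concavity version of the max property
  have strong : ∀ m' q, q ∈ Set.Icc 0 qmax →
      a * (q - c * (q - m') ^ 2) - g q + (a * c / 2) * (q - qstar m') ^ 2 ≤
        a * (qstar m' - c * (qstar m' - m') ^ 2) - g (qstar m') := by
    intro m' q hq
    obtain ⟨hq1, _⟩ := hqstar m'
    set q1 := qstar m' with hq1def
    have hmid : (q + q1) / 2 ∈ Set.Icc 0 qmax := by
      rcases hq with ⟨h1, h2⟩; rcases hq1 with ⟨h3, h4⟩
      constructor <;> [linarith; linarith]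
    have h2 := hg.2 hq hq1 (by norm_num : (0:ℝ) ≤ 1/2) (by norm_num : (0:ℝ) ≤ 1/2)
      (by norm_num)
    have e : (1/2 : ℝ) • q + (1/2 : ℝ) • q1 = (q + q1) / 2 := by
      simp [smul_eq_mul]; ring
    rw [e] at h2
    simp only [smul_eq_mul] at h2
    have h1 := hmax m' ((q + q1) / 2) hmid
    nlinarith [h1, h2, mul_pos ha hc]
  intro m
  set q1 := qstar m with hq1def
  have hq1 := (hqstar m).1
  -- Lipschitz bound (squared form) on qstar near m
  have hlip : ∀ m', (qstar m' - q1) ^ 2 ≤ 4 * (m' - m) ^ 2 := by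
    intro m'
    have s1 := strong m (qstar m') (hqstar m').1
    have s2 := strong m' q1 hq1
    have hd : (qstar m' - q1) ^ 2 ≤ 2 * (m' - m) * (qstar m' - q1) := by
      have hac : 0 < a * c := mul_pos ha hc
      nlinarith [s1, s2]
    nlinarith [sq_nonneg (2 * (m' - m) - (qstar m' - q1)), hd]
  -- error bound
  have herr : ∀ m',
      |(a * (qstar m' - c * (qstar m' - m') ^ 2) - g (qstar m')) -
        (a * (q1 - c * (q1 - m) ^ 2) - g q1) - (m' - m) * (2 * a * c * (q1 - m))| ≤
        5 * (a * c) * (m' - m) ^ 2 := by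
    intro m'
    have hlow := hmax m' q1 hq1
    have hhigh := hmax m (qstar m') (hqstar m').1
    have hl := hlip m'
    have hac : 0 < a * c := mul_pos ha hc
    rw [abs_le]
    constructor
    · nlinarith [hlow]
    · nlinarith [hhigh, hl, sq_nonneg (2 * (m' - m) - (qstar m' - q1)),
        mul_le_mul_of_nonneg_left hl (le_of_lt hac)]
  -- conclude
  rw [hasDerivAt_iff_isLittleO]
  rw [Asymptotics.isLittleO_iff]
  intro C hC
  have hac : 0 < 5 * (a * c) := by positivity
  rw [Metric.eventually_nhds_iff]
  refine ⟨C / (5 * (a * c)), by positivity, fun m' hm' => ?_⟩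
  have h1 := herr m'
  have h2 : |m' - m| < C / (5 * (a * c)) := by
    simpa [Real.dist_eq] using hm'
  have h3 : 5 * (a * c) * (m' - m) ^ 2 ≤ C * |m' - m| := by
    have : (m' - m) ^ 2 = |m' - m| * |m' - m| := by
      rw [← sq_abs]; ring
    rw [this]
    have habs : 0 ≤ |m' - m| := abs_nonneg _
    calc 5 * (a * c) * (|m' - m| * |m' - m|)
        ≤ 5 * (a * c) * ((C / (5 * (a * c))) * |m' - m|) := by
          apply mul_le_mul_of_nonneg_left _ (le_of_lt hac)
          exact mul_le_mul_of_nonneg_right (le_of_lt h2) habs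
      _ = C * |m' - m| := by field_simp
  calc ‖(a * (qstar m' - c * (qstar m' - m') ^ 2) - g (qstar m')) -
        (a * (q1 - c * (q1 - m) ^ 2) - g q1) - (m' - m) • (2 * a * c * (q1 - m))‖
      = |(a * (qstar m' - c * (qstar m' - m') ^ 2) - g (qstar m')) -
        (a * (q1 - c * (q1 - m) ^ 2) - g q1) - (m' - m) * (2 * a * c * (q1 - m))| := by
        simp [smul_eq_mul]
    _ ≤ 5 * (a * c) * (m' - m) ^ 2 := h1
    _ ≤ C * |m' - m| := h3
    _ = C * ‖m' - m‖ := by simp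
end

section
/- Let f : [0, q_max] → ℝ be convex, increasing, differentiable with f'(q) > 0 for all q ∈ (0, q_max], let a > 0, c > 0, m ∈ [0, q_max], and for each b ≥ 0 let q*(b) be the unique maximizer over [0, q_max] of φ_b(q) = a(q − c(q − m)^2) − b·f(q). Then q*(b) → 0 as b → ∞. -/
theorem stmt_5 (a c qmax m : ℝ) (ha : 0 < a) (hc : 0 < c) (hqmax : 0 < qmax)
    (hm : m ∈ Set.Icc 0 qmax)
    (f : ℝ → ℝ) (hfconv : ConvexOn ℝ (Set.Icc 0 qmax) f)
    (hfmono : MonotoneOn f (Set.Icc 0 qmax))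
    (hfdiff : DifferentiableOn ℝ f (Set.Icc 0 qmax))
    (hf' : ∀ q ∈ Set.Ioc 0 qmax, 0 < deriv f q)
    (qstar : ℝ → ℝ)
    (hqstar : ∀ b : ℝ, 0 ≤ b → qstar b ∈ Set.Icc 0 qmax ∧
      IsMaxOn (fun q => a * (q - c * (q - m) ^ 2) - b * f q) (Set.Icc 0 qmax) (qstar b)) :
    Filter.Tendsto qstar Filter.atTop (nhds 0) := by
  have hsm : StrictMonoOn f (Set.Icc 0 qmax) := by
    apply strictMonoOn_of_deriv_pos (convex_Icc 0 qmax) hfdiff.continuousOn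
    intro x hx
    rw [interior_Icc] at hx
    exact hf' x ⟨hx.1, hx.2.le⟩
  rw [Metric.tendsto_atTop]
  intro ε hε
  set ε' := min ε qmax with hε'
  have hε'0 : 0 < ε' := lt_min hε hqmax
  have hε'mem : ε' ∈ Set.Icc 0 qmax := ⟨hε'0.le, min_le_right _ _⟩
  have h0mem : (0 : ℝ) ∈ Set.Icc 0 qmax := ⟨le_refl _, hqmax.le⟩
  have hδ : 0 < f ε' - f 0 := sub_pos.2 (hsm h0mem hε'mem hε'0)
  set δ := f ε' - f 0
  set M := a * (qmax + c * m ^ 2) with hM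
  have hMpos : 0 < M := by positivity
  refine ⟨max 0 (M / δ + 1), fun b hb => ?_⟩
  have hb0 : 0 ≤ b := le_trans (le_max_left _ _) hb
  obtain ⟨hqmem, hmax⟩ := hqstar b hb0
  have hlt : qstar b < ε' := by
    by_contra hge
    push_neg at hge
    have hfq : f ε' ≤ f (qstar b) := hfmono hε'mem hqmem hge
    have hineq := hmax h0mem
    simp only [Set.mem_setOf_eq] at hineq
    -- a*(0 - c*(0-m)^2) - b*f 0 ≤ a*(q - c*(q-m)^2) - b*f q
    have key : b * (f (qstar b) - f 0) ≤ M := by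
      have h1 : a * (qstar b - c * (qstar b - m) ^ 2) ≤ a * qmax := by
        have : qstar b - c * (qstar b - m) ^ 2 ≤ qmax := by nlinarith [hqmem.2, sq_nonneg (qstar b - m)]
        nlinarith
      nlinarith [hineq, sq_nonneg m]
    have hbig : M < b * (f (qstar b) - f 0) := by
      have hδq : δ ≤ f (qstar b) - f 0 := by simp only [δ]; linarith
      have hbM : M / δ + 1 ≤ b := le_trans (le_max_right _ _) hb
      have h2 : (M / δ + 1) * δ ≤ b * δ := mul_le_mul_of_nonneg_right hbM hδ.le
      rw [add_mul, div_mul_cancel₀ _ hδ.ne', one_mul] at h2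
      have h3 : b * δ ≤ b * (f (qstar b) - f 0) := mul_le_mul_of_nonneg_left hδq hb0
      linarith
    linarith
  have h0le : 0 ≤ qstar b := hqmem.1
  rw [Real.dist_eq, abs_of_nonneg (by linarith)]
  simp only [sub_zero]
  exact lt_of_lt_of_le hlt (min_le_left _ _)
end

section
/- Let ε > 0, p > 0, p̄ > 0, and suppose sequences (d_s)_{s≥0}, (λ_s)_{s≥0}, (l_s)_{s≥1}, (σ_s)_{s≥1} of reals satisfy d_{s+1} ≥ d_s + ε·((p·l_{s+1}·σ_{s+1})/p̄ − λ_s) for all s ≥ 0 (where σ_{s+1} = f_{s+1}(q*_{s+1}) ≥ 0 is the chosen compression rate), and Σ_{s=1}^S λ_s = Σ_{s=1}^S l_{s+1} − (λ_{S+1} − λ_1)/ε. If l_{s} ∈ [l_min, l_max] with l_min > 0, and the sequences (d_s) and (λ_s) are bounded, then limsup_{S→∞} p·(Σ_{s=1}^S l_{s+1} σ_{s+1})/(Σ_{s=1}^S l_{s+1}) ≤ p̄. -/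
theorem stmt_8 (ε p pbar lmin lmax : ℝ) (hε : 0 < ε) (hp : 0 < p) (hpbar : 0 < pbar)
    (hlmin : 0 < lmin)
    (d lam l σ : ℕ → ℝ)
    (hσ : ∀ s, 0 ≤ σ s)
    (hd : ∀ s : ℕ, d s + ε * (p * l (s + 1) * σ (s + 1) / pbar - lam s) ≤ d (s + 1))
    (htel : ∀ S : ℕ, 1 ≤ S →
      ∑ s ∈ Finset.Icc 1 S, lam s
        = ∑ s ∈ Finset.Icc 1 S, l (s + 1) - (lam (S + 1) - lam 1) / ε)
    (hl : ∀ s, l s ∈ Set.Icc lmin lmax)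
    (hbd : ∃ M : ℝ, ∀ s, |d s| ≤ M ∧ |lam s| ≤ M) :
    Filter.limsup
        (fun S : ℕ =>
          p * (∑ s ∈ Finset.Icc 1 S, l (s + 1) * σ (s + 1)) /
            (∑ s ∈ Finset.Icc 1 S, l (s + 1)))
        Filter.atTop ≤ pbar := by
  obtain ⟨M, hM⟩ := hbd
  have hM0 : 0 ≤ M := le_trans (abs_nonneg _) (hM 0).1
  set f : ℕ → ℝ := fun S =>
    p * (∑ s ∈ Finset.Icc 1 S, l (s + 1) * σ (s + 1)) /
      (∑ s ∈ Finset.Icc 1 S, l (s + 1)) with hf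
  set C : ℝ := pbar * (4 * M) / ε with hC
  have hC0 : 0 ≤ C := by positivity
  have hlpos : ∀ s, 0 < l s := fun s => lt_of_lt_of_le hlmin (hl s).1
  -- key summed inequality
  have key : ∀ S : ℕ,
      ε * ∑ s ∈ Finset.Icc 1 S, (p * l (s + 1) * σ (s + 1) / pbar - lam s)
        ≤ d (S + 1) - d 1 := by
    intro S
    induction S with
    | zero => simp
    | succ S ih =>
      rw [Finset.sum_Icc_succ_top (by omega : 1 ≤ S + 1), mul_add]
      have := hd (S + 1)
      linarith
  -- pointwise bound for S ≥ 1
  have hbound : ∀ S : ℕ, 1 ≤ S → f S ≤ pbar + C / (lmin * S) := by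
    intro S hS
    set A : ℝ := ∑ s ∈ Finset.Icc 1 S, l (s + 1) * σ (s + 1) with hA
    set L : ℝ := ∑ s ∈ Finset.Icc 1 S, l (s + 1) with hL
    have hA0 : 0 ≤ A :=
      Finset.sum_nonneg fun s _ => mul_nonneg (hlpos _).le (hσ _)
    have hLS : lmin * S ≤ L := by
      have : ∀ s ∈ Finset.Icc 1 S, lmin ≤ l (s + 1) := fun s _ => (hl (s + 1)).1
      calc lmin * S = (Finset.Icc 1 S).card • lmin := by
            rw [Nat.card_Icc]; simp [nsmul_eq_mul, mul_comm]
        _ ≤ L := Finset.card_nsmul_le_sum _ _ _ this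
    have hLSpos : (0 : ℝ) < lmin * S := by
      have : (1 : ℝ) ≤ (S : ℝ) := by exact_mod_cast hS
      nlinarith
    have hLpos : 0 < L := lt_of_lt_of_le hLSpos hLS
    -- rewrite the sum in key
    have hsum : ∑ s ∈ Finset.Icc 1 S, (p * l (s + 1) * σ (s + 1) / pbar - lam s)
        = p * A / pbar - ∑ s ∈ Finset.Icc 1 S, lam s := by
      rw [Finset.sum_sub_distrib, hA, Finset.mul_sum, Finset.sum_div]
      simp [mul_assoc]
    have hkey := key S
    rw [hsum, htel S hS] at hkey
    -- expand: ε * (p*A/pbar - (L - (lam (S+1) - lam 1)/ε)) ≤ d (S+1) - d 1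
    have hεne : ε ≠ 0 := ne_of_gt hε
    have hexp : ε * (p * A / pbar) - ε * L + (lam (S + 1) - lam 1) ≤ d (S + 1) - d 1 := by
      have : ε * ((lam (S + 1) - lam 1) / ε) = lam (S + 1) - lam 1 :=
        mul_div_cancel₀ _ hεne
      nlinarith [hkey]
    have hdb : d (S + 1) - d 1 ≤ 2 * M := by
      have h1 := (hM (S + 1)).1
      have h2 := (hM 1).1
      have := abs_le.mp h1
      have := abs_le.mp h2
      linarith
    have hlb : -(2 * M) ≤ lam (S + 1) - lam 1 := by
      have h1 := abs_le.mp (hM (S + 1)).2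
      have h2 := abs_le.mp (hM 1).2
      linarith
    have hmain : p * A / pbar ≤ L + 4 * M / ε := by
      have h4 : ε * (p * A / pbar) ≤ ε * L + 4 * M := by linarith
      rw [← sub_nonneg]
      have : L + 4 * M / ε - p * A / pbar = (ε * L + 4 * M - ε * (p * A / pbar)) / ε := by
        field_simp
      rw [this]
      exact div_nonneg (by linarith) hε.le
    have hpA : p * A ≤ pbar * L + C := by
      have := mul_le_mul_of_nonneg_left hmain hpbar.le
      rw [mul_div_cancel₀ _ (ne_of_gt hpbar)] at this
      calc p * A ≤ pbar * (L + 4 * M / ε) := this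
        _ = pbar * L + C := by rw [hC]; ring
    calc f S = p * A / L := rfl
      _ ≤ (pbar * L + C) / L := by gcongr
      _ = pbar + C / L := by field_simp
      _ ≤ pbar + C / (lmin * S) := by
          gcongr
  -- nonnegativity of f
  have hf0 : ∀ S, 0 ≤ f S := by
    intro S
    apply div_nonneg
    · exact mul_nonneg hp.le
        (Finset.sum_nonneg fun s _ => mul_nonneg (hlpos _).le (hσ _))
    · exact Finset.sum_nonneg fun s _ => (hlpos _).le
  -- limsup argument
  have hg : Filter.Tendsto (fun S : ℕ => pbar + C / (lmin * S)) Filter.atTop (nhds pbar) := by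
    have h1 : Filter.Tendsto (fun S : ℕ => C / (lmin * S)) Filter.atTop (nhds 0) := by
      have : (fun S : ℕ => C / (lmin * S)) = fun S : ℕ => (C / lmin) * (1 / S) := by
        funext S; field_simp
      rw [this]
      simpa using (tendsto_one_div_atTop_nhds_zero_nat.const_mul (C / lmin))
    simpa using (tendsto_const_nhds.add h1 :
      Filter.Tendsto (fun S : ℕ => pbar + C / (lmin * S)) Filter.atTop (nhds (pbar + 0)))
  have hle : Filter.limsup f Filter.atTop ≤
      Filter.limsup (fun S : ℕ => pbar + C / (lmin * S)) Filter.atTop := by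
    apply Filter.limsup_le_limsup
    · filter_upwards [Filter.eventually_ge_atTop 1] with S hS
      exact hbound S hS
    · apply Filter.IsBoundedUnder.isCoboundedUnder_le
      refine ⟨0, ?_⟩
      rw [Filter.eventually_map]
      exact Filter.Eventually.of_forall hf0
    · exact hg.isBoundedUnder_le
  calc Filter.limsup f Filter.atTop ≤ _ := hle
    _ = pbar := hg.limsup_eq
end

section
/- Let C be a nonempty finite set, π : C → (0,1] a probability weight function with Σ_c π(c) = 1, and for each c ∈ C let R(c) ⊆ ℝ_{>0} be a convex set. Define A = { 1/(Σ_{c} π(c)·r(c)) : r(c) ∈ R(c) for all c }. Then A is convex. Specifically, if x = 1/E[r_x] and y = 1/E[r_y] with E[r] := Σ_c π(c) r(c), then for α ∈ [0,1], setting α' = αx/(αx + (1−α)y), one has αx + (1−α)y = 1/E[α' r_x + (1−α') r_y]. -/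
/-! With `E[r] = ∑ c, π c * r c`, the expectation is linear in `r`, so
`E[α' rx + (1 - α') ry] = α' E[rx] + (1 - α') E[ry]`, and the choice
`α' = α x / (α x + (1 - α) y)` with `x = 1 / E[rx]`, `y = 1 / E[ry]` makes this equal to
`1 / (α x + (1 - α) y)`. Since `α' ∈ [0, 1]` and each `R c` is convex, `α' rx + (1 - α') ry`
is again a selection, which gives convexity of the set of inverse expectations. -/

theorem add_div_reweight {K : Type*} [Field K] {a b α : K} (ha : a ≠ 0) (hb : b ≠ 0)
    (hD : α * (1 / a) + (1 - α) * (1 / b) ≠ 0) :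
    α * (1 / a) + (1 - α) * (1 / b)
      = 1 / (α * (1 / a) / (α * (1 / a) + (1 - α) * (1 / b)) * a
          + (1 - α * (1 / a) / (α * (1 / a) + (1 - α) * (1 / b))) * b) := by
  set D := α * (1 / a) + (1 - α) * (1 / b) with hD_def
  suffices h : α * (1 / a) / D * a + (1 - α * (1 / a) / D) * b = 1 / D by
    rw [h, one_div_one_div]
  field_simp
  rw [hD_def]
  field_simp
  ring

theorem convexComb_one_div_pos {a b α : ℝ} (ha : 0 < a) (hb : 0 < b) (hα : α ∈ Set.Icc 0 1) :
    0 < α * (1 / a) + (1 - α) * (1 / b) :=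
  convex_Ioi (0 : ℝ) (one_div_pos.2 ha) (one_div_pos.2 hb) hα.1 (sub_nonneg.2 hα.2)
    (add_sub_cancel α 1)

theorem div_add_mem_Icc {p q : ℝ} (hp : 0 ≤ p) (hq : 0 ≤ q) (hpq : 0 < p + q) :
    p / (p + q) ∈ Set.Icc 0 1 :=
  ⟨div_nonneg hp hpq.le, (div_le_one hpq).2 (le_add_of_nonneg_right hq)⟩

theorem sum_mul_add_mul {C : Type*} [Fintype C] (π x y : C → ℝ) (a b : ℝ) :
    ∑ c, π c * (a * x c + b * y c) = a * ∑ c, π c * x c + b * ∑ c, π c * y c := by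
  simp only [Finset.mul_sum, ← Finset.sum_add_distrib]
  exact Finset.sum_congr rfl fun c _ => by ring

theorem one_div_expect_reweight {C : Type*} [Fintype C] {π rx ry : C → ℝ}
    (hx : 0 < ∑ c, π c * rx c) (hy : 0 < ∑ c, π c * ry c) {α : ℝ} (hα : α ∈ Set.Icc 0 1) :
    α * (1 / ∑ c, π c * rx c) + (1 - α) * (1 / ∑ c, π c * ry c)
      = 1 / ∑ c, π c *
          ((α * (1 / ∑ c', π c' * rx c') /
              (α * (1 / ∑ c', π c' * rx c') + (1 - α) * (1 / ∑ c', π c' * ry c'))) * rx c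
            + (1 - α * (1 / ∑ c', π c' * rx c') /
                (α * (1 / ∑ c', π c' * rx c') + (1 - α) * (1 / ∑ c', π c' * ry c'))) * ry c) := by
  rw [sum_mul_add_mul]
  exact add_div_reweight hx.ne' hy.ne' (convexComb_one_div_pos hx hy hα).ne'

theorem stmt_10_general (C : Type*) [Fintype C] [Nonempty C]
    (π : C → ℝ) (hπ : ∀ c, 0 < π c ∧ π c ≤ 1)
    (R : C → Set ℝ) (hRpos : ∀ c, R c ⊆ Set.Ioi 0) (hRconv : ∀ c, Convex ℝ (R c)) :
    Convex ℝ {x : ℝ | ∃ r : C → ℝ, (∀ c, r c ∈ R c) ∧ x = 1 / ∑ c, π c * r c} ∧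
      ∀ rx ry : C → ℝ, (∀ c, rx c ∈ R c) → (∀ c, ry c ∈ R c) →
        ∀ α : ℝ, α ∈ Set.Icc (0 : ℝ) 1 →
          α * (1 / ∑ c, π c * rx c) + (1 - α) * (1 / ∑ c, π c * ry c)
            = 1 / ∑ c, π c *
                ((α * (1 / ∑ c', π c' * rx c') /
                    (α * (1 / ∑ c', π c' * rx c') + (1 - α) * (1 / ∑ c', π c' * ry c')))
                    * rx c
                  + (1 - α * (1 / ∑ c', π c' * rx c') /
                      (α * (1 / ∑ c', π c' * rx c') + (1 - α) * (1 / ∑ c', π c' * ry c')))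
                    * ry c) := by
  have expect_pos : ∀ r : C → ℝ, (∀ c, r c ∈ R c) → 0 < ∑ c, π c * r c := fun r hr =>
    Finset.sum_pos (fun c _ => mul_pos (hπ c).1 (hRpos c (hr c))) Finset.univ_nonempty
  refine ⟨?_, fun rx ry hrx hry α hα =>
    one_div_expect_reweight (expect_pos rx hrx) (expect_pos ry hry) hα⟩
  rintro _ ⟨rx, hrx, rfl⟩ _ ⟨ry, hry, rfl⟩ α β hα hβ hαβ
  obtain rfl : β = 1 - α := by linarith
  have hx := expect_pos rx hrx
  have hy := expect_pos ry hry
  have hα' : α ∈ Set.Icc (0 : ℝ) 1 := ⟨hα, by linarith⟩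
  have hweight := div_add_mem_Icc (by positivity) (by positivity) (convexComb_one_div_pos hx hy hα')
  refine ⟨_, fun c => hRconv c (hrx c) (hry c) hweight.1 (sub_nonneg.2 hweight.2)
    (add_sub_cancel _ 1), ?_⟩
  exact one_div_expect_reweight hx hy hα'

theorem stmt_10 (C : Type*) [Fintype C] [Nonempty C]
    (π : C → ℝ) (hπ : ∀ c, 0 < π c ∧ π c ≤ 1) (hsum : ∑ c, π c = 1)
    (R : C → Set ℝ) (hRpos : ∀ c, R c ⊆ Set.Ioi 0) (hRconv : ∀ c, Convex ℝ (R c)) :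
    Convex ℝ {x : ℝ | ∃ r : C → ℝ, (∀ c, r c ∈ R c) ∧ x = 1 / ∑ c, π c * r c} ∧
      ∀ rx ry : C → ℝ, (∀ c, rx c ∈ R c) → (∀ c, ry c ∈ R c) →
        ∀ α : ℝ, α ∈ Set.Icc (0 : ℝ) 1 →
          α * (1 / ∑ c, π c * rx c) + (1 - α) * (1 / ∑ c, π c * ry c)
            = 1 / ∑ c, π c *
                ((α * (1 / ∑ c', π c' * rx c') /
                    (α * (1 / ∑ c', π c' * rx c') + (1 - α) * (1 / ∑ c', π c' * ry c')))
                    * rx c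
                  + (1 - α * (1 / ∑ c', π c' * rx c') /
                      (α * (1 / ∑ c', π c' * rx c') + (1 - α) * (1 / ∑ c', π c' * ry c')))
                    * ry c) :=
  stmt_10_general C π hπ R hRpos hRconv
end

section
/- Let g : [0, T] → ℝ be absolutely continuous with g(t) ≥ m for all t (m ∈ ℝ a lower bound), and suppose there exist a continuous function Δ : ℝ^n → ℝ and an absolutely continuous path Θ : [0,∞) → K (K ⊆ ℝ^n compact) such that g(t) = L(Θ(t)) for a continuous L : K → ℝ, d/dt L(Θ(t)) ≤ Δ(Θ(t)) for a.e. t, Δ ≤ 0 on K, and Δ(Θ) < 0 whenever dist(Θ, H*) ≥ d for a fixed d > 0 and closed set H* ⊆ K. If additionally Θ is Lipschitz, then it is not the case that dist(Θ(t_m), H*) ≥ d for an infinite sequence t_m → ∞ with t_{m+1} − t_m bounded below by a positive constant; consequently lim_{t→∞} dist(Θ(t), H*) = 0. -/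
theorem stmt_18 (n : ℕ) (K Hstar : Set (EuclideanSpace ℝ (Fin n)))
    (hK : IsCompact K) (hHstar : IsClosed Hstar) (hHK : Hstar ⊆ K)
    (Θ : ℝ → EuclideanSpace ℝ (Fin n)) (CΘ : NNReal) (hlip : LipschitzWith CΘ Θ)
    (hΘK : ∀ t, Θ t ∈ K)
    (L Δ : EuclideanSpace ℝ (Fin n) → ℝ) (hL : Continuous L) (hΔ : Continuous Δ)
    (m : ℝ) (hm : ∀ t, m ≤ L (Θ t))
    (hΔ0 : ∀ x ∈ K, Δ x ≤ 0)
    (hΔneg : ∀ d : ℝ, 0 < d → ∀ x ∈ K, d ≤ Metric.infDist x Hstar → Δ x < 0)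
    (hdrift : ∀ a b : ℝ, 0 ≤ a → a ≤ b →
      L (Θ b) - L (Θ a) ≤ ∫ t in a..b, Δ (Θ t)) :
    (∀ d : ℝ, 0 < d →
        ¬ ∃ (t : ℕ → ℝ) (c : ℝ), 0 < c ∧ (∀ k, 0 ≤ t k) ∧
          (∀ k, t k + c ≤ t (k + 1)) ∧
          ∀ k, d ≤ Metric.infDist (Θ (t k)) Hstar) ∧
      Filter.Tendsto (fun t => Metric.infDist (Θ t) Hstar) Filter.atTop (nhds 0) := by
  have hΘc : Continuous Θ := hlip.continuous
  have hint : ∀ a b : ℝ, IntervalIntegrable (fun t => Δ (Θ t)) MeasureTheory.volume a b :=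
    fun a b => Continuous.intervalIntegrable (hΔ.comp hΘc) a b
  -- monotonicity of L ∘ Θ
  have hmono : ∀ a b : ℝ, 0 ≤ a → a ≤ b → L (Θ b) ≤ L (Θ a) := by
    intro a b ha hab
    have h1 := hdrift a b ha hab
    have h2 : (∫ t in a..b, Δ (Θ t)) ≤ ∫ _ in a..b, (0:ℝ) :=
      intervalIntegral.integral_mono_on hab (hint a b) intervalIntegrable_const
        (fun t _ => hΔ0 _ (hΘK t))
    rw [intervalIntegral.integral_const, smul_zero] at h2
    linarith
  -- uniform negativity away from Hstar
  have hA : ∀ d : ℝ, 0 < d → ∃ ε : ℝ, 0 < ε ∧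
      ∀ x ∈ K, d ≤ Metric.infDist x Hstar → Δ x ≤ -ε := by
    intro d hd
    have hScl : IsClosed {x : EuclideanSpace ℝ (Fin n) | d ≤ Metric.infDist x Hstar} :=
      isClosed_le continuous_const (Metric.continuous_infDist_pt Hstar)
    have hSc : IsCompact (K ∩ {x | d ≤ Metric.infDist x Hstar}) := hK.inter_right hScl
    rcases (K ∩ {x | d ≤ Metric.infDist x Hstar}).eq_empty_or_nonempty with he | hne
    · refine ⟨1, one_pos, fun x hx hdx => ?_⟩
      rw [Set.eq_empty_iff_forall_notMem] at he
      exact absurd (⟨hx, hdx⟩ : x ∈ K ∩ {x | d ≤ Metric.infDist x Hstar}) (he x)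
    · obtain ⟨x0, hx0, hmax⟩ := hSc.exists_isMaxOn hne (hΔ.continuousOn)
      have hneg : Δ x0 < 0 := hΔneg d hd x0 hx0.1 hx0.2
      exact ⟨-Δ x0, by linarith, fun x hx hdx => by
        have : Δ x ≤ Δ x0 := hmax (⟨hx, hdx⟩ : x ∈ K ∩ {x | d ≤ Metric.infDist x Hstar}); linarith⟩
  have part1 : ∀ d : ℝ, 0 < d →
      ¬ ∃ (t : ℕ → ℝ) (c : ℝ), 0 < c ∧ (∀ k, 0 ≤ t k) ∧
        (∀ k, t k + c ≤ t (k + 1)) ∧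
        ∀ k, d ≤ Metric.infDist (Θ (t k)) Hstar := by
    rintro d hd ⟨t, c, hc, ht0, hgap, hfar⟩
    obtain ⟨ε, hε, hεΔ⟩ := hA (d / 2) (by linarith)
    set δ : ℝ := min c (d / (2 * (CΘ + 1))) with hδdef
    have hδpos : 0 < δ := lt_min hc (by positivity)
    have hδc : δ ≤ c := min_le_left _ _
    have hfar2 : ∀ k, ∀ s ∈ Set.Icc (t k) (t k + δ),
        d / 2 ≤ Metric.infDist (Θ s) Hstar := by
      intro k s hs
      have hdist : dist (Θ s) (Θ (t k)) ≤ d / 2 := by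
        have h0 : dist s (t k) ≤ δ := by
          rw [Real.dist_eq, abs_le]
          constructor <;> [linarith [hs.1]; linarith [hs.2]]
        calc dist (Θ s) (Θ (t k)) ≤ CΘ * dist s (t k) := hlip.dist_le_mul s (t k)
          _ ≤ (CΘ + 1) * δ := by
              apply mul_le_mul (by simp) h0 dist_nonneg (by positivity)
          _ ≤ (CΘ + 1) * (d / (2 * (CΘ + 1))) := by
              exact mul_le_mul_of_nonneg_left (min_le_right _ _) (by positivity)
          _ = d / 2 := by field_simp
      have h1 : Metric.infDist (Θ (t k)) Hstar ≤
          Metric.infDist (Θ s) Hstar + dist (Θ (t k)) (Θ s) :=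
        Metric.infDist_le_infDist_add_dist
      have h2 := hfar k
      rw [dist_comm] at h1
      linarith
    have hstep : ∀ k, L (Θ (t k + δ)) - L (Θ (t k)) ≤ -(ε * δ) := by
      intro k
      have h1 := hdrift (t k) (t k + δ) (ht0 k) (by linarith)
      have h2 : (∫ s in (t k)..(t k + δ), Δ (Θ s)) ≤
          ∫ s in (t k)..(t k + δ), (-ε : ℝ) := by
        apply intervalIntegral.integral_mono_on (by linarith) (hint _ _)
          (intervalIntegrable_const)
        intro s hs
        exact hεΔ _ (hΘK s) (hfar2 k s hs)
      rw [intervalIntegral.integral_const] at h2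
      have h3 : (t k + δ - t k) • (-ε : ℝ) = -(ε * δ) := by
        simp [smul_eq_mul]; ring
      rw [h3] at h2
      linarith
    have hind : ∀ k : ℕ, L (Θ (t k + δ)) ≤ L (Θ (t 0)) - (k + 1 : ℝ) * (ε * δ) := by
      intro k
      induction k with
      | zero => have := hstep 0; push_cast; linarith
      | succ k ih =>
        have h1 := hstep (k + 1)
        have h2 : L (Θ (t (k + 1))) ≤ L (Θ (t k + δ)) :=
          hmono _ _ (by linarith [ht0 k]) (by linarith [hgap k])
        push_cast at ih ⊢
        linarith
    obtain ⟨k, hk⟩ := exists_nat_gt ((L (Θ (t 0)) - m) / (ε * δ))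
    have hεδ : 0 < ε * δ := by positivity
    rw [div_lt_iff₀ hεδ] at hk
    have h1 := hind k
    have h2 := hm (t k + δ)
    have : (k : ℝ) * (ε * δ) ≤ (k + 1 : ℝ) * (ε * δ) := by nlinarith
    linarith
  refine ⟨part1, ?_⟩
  by_contra hno
  rw [Metric.tendsto_atTop] at hno
  push_neg at hno
  obtain ⟨ε, hε, hfreq⟩ := hno
  have hkey : ∀ s : ℝ, ∃ u : ℝ, s + 1 ≤ u ∧ ε ≤ Metric.infDist (Θ u) Hstar := by
    intro s
    obtain ⟨u, hu1, hu2⟩ := hfreq (s + 1)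
    refine ⟨u, hu1, ?_⟩
    rwa [Real.dist_0_eq_abs, abs_of_nonneg Metric.infDist_nonneg] at hu2
  choose f hf1 hf2 using hkey
  set t : ℕ → ℝ := fun k => Nat.rec (f 0) (fun _ u => f u) k with ht
  have ht0 : ∀ k, 0 ≤ t k := by
    intro k
    induction k with
    | zero => have := hf1 0; show (0:ℝ) ≤ f 0; linarith
    | succ k ih => have := hf1 (t k); show (0:ℝ) ≤ f (t k); linarith
  have hgap : ∀ k, t k + 1 ≤ t (k + 1) := fun k => hf1 (t k)
  have hfar : ∀ k, ε ≤ Metric.infDist (Θ (t k)) Hstar := by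
    intro k
    cases k with
    | zero => exact hf2 0
    | succ k => exact hf2 (t k)
  exact part1 ε hε ⟨t, 1, one_pos, ht0, hgap, hfar⟩
end
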